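/- arXiv:2212.07491 — 3 statements merged into one kernel-verified Lean document; each statement's English description precedes it below -/
import Mathlib

section
/- Let M_N be the adjacency matrix described above. Then λ > 1 is an eigenvalue of M_N with a positive eigenvector if and only if λ^{-1} + 2(λ^{-2} + λ^{-3} + ... + λ^{-(N+1)}) = 1. -/
/-- Transition relation of the subshift of finite type `Σ_{ℓ,N}` on states `{-N,…,N}`. -/
def adjSFT (N : ℕ) (i j : ℤ) : Prop :=
  (i = 0 ∧ (j = 0 ∨ j = 1 ∨ j = -1)) ∨
  (1 ≤ i ∧ i ≤ (N : ℤ) - 1 ∧ (j = i + 1 ∨ j = 0)) ∨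
  (i = (N : ℤ) ∧ j = 0) ∨
  (-((N : ℤ) - 1) ≤ i ∧ i ≤ -1 ∧ (j = i - 1 ∨ j = 0)) ∨
  (i = -(N : ℤ) ∧ j = 0)

open scoped Classical in
/-- The `(2N+1)×(2N+1)` adjacency matrix of `Σ_{ℓ,N}` (indices shifted so that `i ↦ i - N`). -/
noncomputable def adjMatrix (N : ℕ) : Matrix (Fin (2 * N + 1)) (Fin (2 * N + 1)) ℝ :=
  fun i j => if adjSFT N ((i : ℤ) - N) ((j : ℤ) - N) then 1 else 0

open scoped Classical

lemma sum_ite_one' {n : ℕ} (a : Fin n) (P : Fin n → Prop) [DecidablePred P]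
    (f : Fin n → ℝ) (h : ∀ j, P j ↔ j = a) :
    ∑ j, (if P j then f j else 0) = f a := by
  simp only [h]
  simp [Finset.sum_ite_eq']

lemma sum_ite_two' {n : ℕ} (a b : Fin n) (hab : a ≠ b) (P : Fin n → Prop) [DecidablePred P]
    (f : Fin n → ℝ) (h : ∀ j, P j ↔ j = a ∨ j = b) :
    ∑ j, (if P j then f j else 0) = f a + f b := by
  simp only [h]
  have key : ∀ j : Fin n, (if j = a ∨ j = b then f j else 0) =
      (if j = a then f j else 0) + (if j = b then f j else 0) := by
    intro j
    by_cases h1 : j = a <;> by_cases h2 : j = b <;> simp_all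
  simp only [key, Finset.sum_add_distrib]
  simp [Finset.sum_ite_eq']

lemma sum_ite_three' {n : ℕ} (a b c : Fin n) (hab : a ≠ b) (hac : a ≠ c) (hbc : b ≠ c)
    (P : Fin n → Prop) [DecidablePred P]
    (f : Fin n → ℝ) (h : ∀ j, P j ↔ j = a ∨ j = b ∨ j = c) :
    ∑ j, (if P j then f j else 0) = f a + f b + f c := by
  simp only [h]
  have key : ∀ j : Fin n, (if j = a ∨ j = b ∨ j = c then f j else 0) =
      (if j = a then f j else 0) + (if j = b then f j else 0) + (if j = c then f j else 0) := by
    intro j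
    by_cases h1 : j = a <;> by_cases h2 : j = b <;> by_cases h3 : j = c <;> simp_all
  simp only [key, Finset.sum_add_distrib]
  simp [Finset.sum_ite_eq']

lemma mulVec_row (N : ℕ) (v : Fin (2*N+1) → ℝ) (i : Fin (2*N+1)) :
    (adjMatrix N).mulVec v i
      = ∑ j : Fin (2*N+1), if adjSFT N ((i:ℤ)-(N:ℤ)) ((j:ℤ)-(N:ℤ)) then v j else 0 := by
  simp [adjMatrix, Matrix.mulVec, dotProduct, ite_mul]

lemma row_top (N : ℕ) (hN : 1 ≤ N) (v : Fin (2*N+1) → ℝ) (i : Fin (2*N+1))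
    (hi : (i:ℕ) = 2*N) :
    (adjMatrix N).mulVec v i = v ⟨N, by omega⟩ := by
  rw [mulVec_row]
  exact sum_ite_one' _ _ _ (fun j => by
    have := j.isLt
    simp only [adjSFT, Fin.ext_iff, Fin.val_mk]
    constructor <;> (intro h; omega))

lemma row_bot (N : ℕ) (hN : 1 ≤ N) (v : Fin (2*N+1) → ℝ) (i : Fin (2*N+1))
    (hi : (i:ℕ) = 0) :
    (adjMatrix N).mulVec v i = v ⟨N, by omega⟩ := by
  rw [mulVec_row]
  exact sum_ite_one' _ _ _ (fun j => by
    have := j.isLt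
    simp only [adjSFT, Fin.ext_iff, Fin.val_mk]
    constructor <;> (intro h; omega))

lemma row_pos (N k : ℕ) (hN : 1 ≤ N) (hk1 : 1 ≤ k) (hk2 : k ≤ N - 1)
    (v : Fin (2*N+1) → ℝ) (i : Fin (2*N+1)) (hi : (i:ℕ) = N + k) :
    (adjMatrix N).mulVec v i = v ⟨N+k+1, by omega⟩ + v ⟨N, by omega⟩ := by
  rw [mulVec_row]
  exact sum_ite_two' _ _ (Fin.ne_of_val_ne (by simp only [Fin.val_mk]; omega)) _ _ (fun j => by
    have := j.isLt
    simp only [adjSFT, Fin.ext_iff, Fin.val_mk]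
    constructor <;> (intro h; omega))

lemma row_neg (N k : ℕ) (hN : 1 ≤ N) (hk1 : 1 ≤ k) (hk2 : k ≤ N - 1)
    (v : Fin (2*N+1) → ℝ) (i : Fin (2*N+1)) (hi : (i:ℕ) = N - k) :
    (adjMatrix N).mulVec v i = v ⟨N-k-1, by omega⟩ + v ⟨N, by omega⟩ := by
  rw [mulVec_row]
  exact sum_ite_two' _ _ (Fin.ne_of_val_ne (by simp only [Fin.val_mk]; omega)) _ _ (fun j => by
    have := j.isLt
    simp only [adjSFT, Fin.ext_iff, Fin.val_mk]
    constructor <;> (intro h; omega))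

lemma row_center (N : ℕ) (hN : 1 ≤ N) (v : Fin (2*N+1) → ℝ) (i : Fin (2*N+1))
    (hi : (i:ℕ) = N) :
    (adjMatrix N).mulVec v i = v ⟨N, by omega⟩ + v ⟨N+1, by omega⟩ + v ⟨N-1, by omega⟩ := by
  rw [mulVec_row]
  exact sum_ite_three' _ _ _ (Fin.ne_of_val_ne (by simp only [Fin.val_mk]; omega)) (Fin.ne_of_val_ne (by simp only [Fin.val_mk]; omega))
    (Fin.ne_of_val_ne (by simp only [Fin.val_mk]; omega)) _ _ (fun j => by
    have := j.isLt
    simp only [adjSFT, Fin.ext_iff, Fin.val_mk]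
    constructor <;> (intro h; omega))
lemma bridge1 (N : ℕ) (lam : ℝ) (hlam : 1 < lam) :
    (lam⁻¹ + 2 * ∑ k ∈ Finset.Icc 2 (N + 1), lam ^ (-(k : ℤ)) = 1)
      ↔ 2 * ∑ j ∈ Finset.range N, lam ^ j = (lam - 1) * lam ^ N := by
  have hne : lam ≠ 0 := by positivity
  have hpow : lam ^ (N+1) ≠ 0 := pow_ne_zero _ hne
  have hmul : lam ^ (N+1) * (lam⁻¹ + 2 * ∑ k ∈ Finset.Icc 2 (N + 1), lam ^ (-(k : ℤ)))
      = lam ^ N + 2 * ∑ j ∈ Finset.range N, lam ^ j := by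
    rw [mul_add]
    congr 1
    · rw [pow_succ]; field_simp
    · rw [mul_left_comm, Finset.mul_sum]
      congr 1
      rw [← Finset.Ico_add_one_right_eq_Icc, Finset.sum_Ico_eq_sum_range]
      have hrange : N + 1 + 1 - 2 = N := by omega
      rw [hrange]
      rw [← Finset.sum_range_reflect (fun j => lam ^ j) N]
      refine Finset.sum_congr rfl (fun i hi => ?_)
      have hi' := Finset.mem_range.mp hi
      rw [← zpow_natCast lam (N+1), ← zpow_add₀ hne, ← zpow_natCast lam (N-1-i)]
      congr 1
      push_cast
      omega
  constructor
  · intro h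
    have h2 : lam ^ (N+1) * (lam⁻¹ + 2 * ∑ k ∈ Finset.Icc 2 (N + 1), lam ^ (-(k : ℤ)))
        = lam ^ (N+1) * 1 := by rw [h]
    rw [hmul, mul_one] at h2
    linear_combination h2 + pow_succ lam N
  · intro h
    have h2 : lam ^ (N+1) * (lam⁻¹ + 2 * ∑ k ∈ Finset.Icc 2 (N + 1), lam ^ (-(k : ℤ)))
        = lam ^ (N+1) := by rw [hmul]; linear_combination h + pow_succ lam N
    exact mul_left_cancel₀ hpow (by rw [h2, mul_one])

lemma bridge2 (N : ℕ) (lam : ℝ) (hlam : 1 < lam) :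
    (2 * ∑ j ∈ Finset.range N, lam ^ j = (lam - 1) * lam ^ N)
      ↔ 1 + 2 * ∑ j ∈ Finset.range N, lam ^ (-((j:ℤ)+1)) = lam := by
  have hne : lam ≠ 0 := by positivity
  have hpow : lam ^ N ≠ 0 := pow_ne_zero _ hne
  have hmul : lam ^ N * (1 + 2 * ∑ j ∈ Finset.range N, lam ^ (-((j:ℤ)+1)))
      = lam ^ N + 2 * ∑ j ∈ Finset.range N, lam ^ j := by
    rw [mul_add, mul_one]
    congr 1
    rw [mul_left_comm, Finset.mul_sum]
    congr 1
    rw [← Finset.sum_range_reflect (fun j => lam ^ j) N]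
    refine Finset.sum_congr rfl (fun i hi => ?_)
    have hi' := Finset.mem_range.mp hi
    rw [← zpow_natCast lam N, ← zpow_add₀ hne, ← zpow_natCast lam (N-1-i)]
    congr 1
    push_cast
    omega
  constructor
  · intro h
    have h2 : lam ^ N * (1 + 2 * ∑ j ∈ Finset.range N, lam ^ (-((j:ℤ)+1)))
        = lam ^ N * lam := by rw [hmul]; linear_combination h + pow_succ lam N
    exact mul_left_cancel₀ hpow h2
  · intro h
    have h2 : lam ^ N * (1 + 2 * ∑ j ∈ Finset.range N, lam ^ (-((j:ℤ)+1)))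
        = lam ^ N * lam := by rw [h]
    rw [hmul] at h2
    linear_combination h2 + pow_succ lam N

lemma forward (N : ℕ) (hN : 1 ≤ N) (lam : ℝ) (hlam : 1 < lam)
    (v : Fin (2*N+1) → ℝ) (hpos : ∀ i, 0 < v i)
    (hv : (adjMatrix N).mulVec v = lam • v) :
    2 * ∑ j ∈ Finset.range N, lam ^ j = (lam - 1) * lam ^ N := by
  have hrow : ∀ i, (adjMatrix N).mulVec v i = lam * v i := fun i => by rw [hv]; simp
  set w := v ⟨N, by omega⟩ with hwdef
  have htop : w = lam * v ⟨2*N, by omega⟩ := by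
    have h := hrow ⟨2*N, by omega⟩
    rwa [row_top N hN v _ rfl] at h
  have hbot : w = lam * v ⟨0, by omega⟩ := by
    have h := hrow ⟨0, by omega⟩
    rwa [row_bot N hN v _ rfl] at h
  have hposrow : ∀ k (hk1 : 1 ≤ k) (hk2 : k ≤ N - 1),
      v ⟨N+k+1, by omega⟩ + w = lam * v ⟨N+k, by omega⟩ := fun k hk1 hk2 => by
    have h := hrow ⟨N+k, by omega⟩
    rwa [row_pos N k hN hk1 hk2 v _ rfl] at h
  have hnegrow : ∀ k (hk1 : 1 ≤ k) (hk2 : k ≤ N - 1),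
      v ⟨N-k-1, by omega⟩ + w = lam * v ⟨N-k, by omega⟩ := fun k hk1 hk2 => by
    have h := hrow ⟨N-k, by omega⟩
    rwa [row_neg N k hN hk1 hk2 v _ rfl] at h
  have hcen : w + v ⟨N+1, by omega⟩ + v ⟨N-1, by omega⟩ = lam * w := by
    have h := hrow ⟨N, by omega⟩
    rwa [row_center N hN v _ rfl] at h
  have key : ∀ d : ℕ, d ≤ N - 1 →
      v ⟨N + (N - d), by omega⟩ * lam ^ (d+1) = w * ∑ j ∈ Finset.range (d+1), lam ^ j := by
    intro d
    induction d with
    | zero =>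
      intro _
      have hidx : (⟨N + (N - 0), by omega⟩ : Fin (2*N+1)) = ⟨2*N, by omega⟩ := by
        apply Fin.ext; simp only [Fin.val_mk]; omega
      rw [hidx]
      simp only [zero_add, Finset.sum_range_one, pow_one, pow_zero]
      linear_combination -htop
    | succ d ih =>
      intro hd
      have hr := hposrow (N - (d+1)) (by omega) (by omega)
      have hidx : (⟨N + (N - (d+1)) + 1, by omega⟩ : Fin (2*N+1))
          = ⟨N + (N - d), by omega⟩ := by
        apply Fin.ext; simp only [Fin.val_mk]; omega
      rw [hidx] at hr
      have ihd := ih (by omega)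
      rw [Finset.sum_range_succ, pow_succ]
      linear_combination (-(lam^(d+1))) * hr + ihd
  have keyneg : ∀ d : ℕ, ∀ _ : d ≤ N - 1,
      v ⟨d, by omega⟩ * lam ^ (d+1) = w * ∑ j ∈ Finset.range (d+1), lam ^ j := by
    intro d
    induction d with
    | zero =>
      intro _
      simp only [zero_add, Finset.sum_range_one, pow_one, pow_zero]
      linear_combination -hbot
    | succ d ih =>
      intro hd
      have hr := hnegrow (N - (d+1)) (by omega) (by omega)
      have hidx1 : (⟨N - (N - (d+1)) - 1, by omega⟩ : Fin (2*N+1)) = ⟨d, by omega⟩ := by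
        apply Fin.ext; simp only [Fin.val_mk]; omega
      have hidx2 : (⟨N - (N - (d+1)), by omega⟩ : Fin (2*N+1)) = ⟨d+1, by omega⟩ := by
        apply Fin.ext; simp only [Fin.val_mk]; omega
      rw [hidx1, hidx2] at hr
      have ihd := ih (by omega)
      rw [Finset.sum_range_succ, pow_succ]
      linear_combination (-(lam^(d+1))) * hr + ihd
  have hP := key (N-1) (le_refl _)
  have hQ := keyneg (N-1) (le_refl _)
  have hidxP : (⟨N + (N - (N-1)), by omega⟩ : Fin (2*N+1)) = ⟨N+1, by omega⟩ := by
    apply Fin.ext; simp only [Fin.val_mk]; omega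
  rw [hidxP] at hP
  have hNN : N - 1 + 1 = N := by omega
  rw [hNN] at hP hQ
  have hw0 : w ≠ 0 := ne_of_gt (hpos _)
  refine mul_left_cancel₀ hw0 ?_
  linear_combination lam^N * hcen - hP - hQ

noncomputable def auxV (N : ℕ) (lam : ℝ) (d : ℕ) : ℝ :=
  ∑ j ∈ Finset.range (N + 1 - d), lam ^ (-((j:ℤ)+1))

noncomputable def auxv (N : ℕ) (lam : ℝ) : Fin (2*N+1) → ℝ :=
  fun i => if (i:ℕ) = N then 1 else auxV N lam ((i:ℤ) - N).natAbs

lemma auxV_pos (N : ℕ) (lam : ℝ) (hlam : 1 < lam) (d : ℕ) (hd : d ≤ N) :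
    0 < auxV N lam d := by
  have h0 : (0:ℝ) < lam := lt_trans zero_lt_one hlam
  refine Finset.sum_pos (fun j _ => ?_) (Finset.nonempty_range_iff.mpr (by omega))
  positivity

lemma auxv_center (N : ℕ) (lam : ℝ) (h : N < 2*N+1) : auxv N lam ⟨N, h⟩ = 1 := by
  simp [auxv]

lemma auxv_posk (N : ℕ) (lam : ℝ) (k : ℕ) (hk1 : 1 ≤ k) (hk2 : k ≤ N) (h : N+k < 2*N+1) :
    auxv N lam ⟨N+k, h⟩ = auxV N lam k := by
  simp only [auxv, Fin.val_mk]
  rw [if_neg (by omega)]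
  congr 1
  omega

lemma auxv_negk (N : ℕ) (lam : ℝ) (k : ℕ) (hk1 : 1 ≤ k) (hk2 : k ≤ N) (h : N-k < 2*N+1) :
    auxv N lam ⟨N-k, h⟩ = auxV N lam k := by
  simp only [auxv, Fin.val_mk]
  rw [if_neg (by omega)]
  congr 1
  omega

lemma auxV_top (N : ℕ) (lam : ℝ) (hlam : 1 < lam) : lam * auxV N lam N = 1 := by
  have hne : lam ≠ 0 := by positivity
  have h1 : N + 1 - N = 1 := by omega
  rw [auxV, h1, Finset.sum_range_one]
  norm_num
  exact mul_inv_cancel₀ hne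

lemma auxV_step (N : ℕ) (lam : ℝ) (hlam : 1 < lam) (k : ℕ) (hk : k ≤ N - 1) (hN : 1 ≤ N) :
    lam * auxV N lam k = auxV N lam (k+1) + 1 := by
  have hne : lam ≠ 0 := by positivity
  have h1 : N + 1 - k = (N - k) + 1 := by omega
  have h2 : N + 1 - (k+1) = N - k := by omega
  rw [auxV, auxV, h1, h2, Finset.mul_sum]
  have step : ∀ j ∈ Finset.range (N - k + 1), lam * lam ^ (-((j:ℤ)+1)) = lam ^ (-(j:ℤ)) := by
    intro j _
    rw [show lam * lam ^ (-((j:ℤ)+1)) = lam ^ (1:ℤ) * lam ^ (-((j:ℤ)+1)) by rw [zpow_one],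
      ← zpow_add₀ hne]
    congr 1
    ring
  rw [Finset.sum_congr rfl step, Finset.sum_range_succ' (fun j => lam ^ (-(j:ℤ))) (N-k)]
  have e3 : ∀ j ∈ Finset.range (N - k), lam ^ (-((j:ℕ)+1:ℤ)) = lam ^ (-((j+1:ℕ):ℤ)) := by
    intro j _
    congr 1
  rw [Finset.sum_congr rfl e3]
  norm_num

lemma backward (N : ℕ) (hN : 1 ≤ N) (lam : ℝ) (hlam : 1 < lam)
    (h : 1 + 2 * ∑ j ∈ Finset.range N, lam ^ (-((j:ℤ)+1)) = lam) :
    ∃ v : Fin (2 * N + 1) → ℝ, (∀ i, 0 < v i) ∧ (adjMatrix N).mulVec v = lam • v := by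
  refine ⟨auxv N lam, fun i => ?_, ?_⟩
  · by_cases hc : (i:ℕ) = N
    · simp [auxv, hc]
    · have hb := i.isLt
      rw [show auxv N lam i = auxV N lam ((i:ℤ) - N).natAbs by simp [auxv, hc]]
      exact auxV_pos N lam hlam _ (by omega)
  · funext i
    have hb := i.isLt
    simp only [Pi.smul_apply, smul_eq_mul]
    rcases Nat.lt_trichotomy (i:ℕ) N with hc | hc | hc
    · -- state negative: i.val < N
      rcases Nat.eq_zero_or_pos (i:ℕ) with h0 | h0
      · -- bottom row, state -N
        rw [row_bot N hN _ i h0, auxv_center]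
        have hieq : i = ⟨N - N, by omega⟩ := Fin.ext (by simp only [Fin.val_mk]; omega)
        conv_rhs => rw [hieq]
        rw [auxv_negk N lam N (by omega) (by omega)]
        exact (auxV_top N lam hlam).symm
      · -- middle negative: k = N - i.val ∈ [1, N-1]
        set k := N - (i:ℕ) with hk
        have hk1 : 1 ≤ k := by omega
        have hk2 : k ≤ N - 1 := by omega
        rw [row_neg N k hN hk1 hk2 _ i (by omega)]
        have hieq : i = ⟨N - k, by omega⟩ := Fin.ext (by simp only [Fin.val_mk]; omega)
        have hidx : (⟨N - k - 1, by omega⟩ : Fin (2*N+1)) = ⟨N - (k+1), by omega⟩ :=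
          Fin.ext (by simp only [Fin.val_mk]; omega)
        conv_rhs => rw [hieq]
        rw [hidx, auxv_negk N lam (k+1) (by omega) (by omega),
          auxv_negk N lam k (by omega) (by omega), auxv_center,
          auxV_step N lam hlam k hk2 hN]
    · -- center row
      rw [row_center N hN _ i hc, auxv_center]
      have hieq : i = ⟨N, by omega⟩ := Fin.ext (by simp only [Fin.val_mk]; omega)
      conv_rhs => rw [hieq]
      rw [auxv_center, mul_one]
      have e1 : auxv N lam ⟨N+1, by omega⟩ = auxV N lam 1 :=
        auxv_posk N lam 1 (by omega) (by omega) _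
      have e2 : auxv N lam ⟨N-1, by omega⟩ = auxV N lam 1 :=
        auxv_negk N lam 1 (by omega) (by omega) _
      rw [e1, e2]
      have hV1 : auxV N lam 1 = ∑ j ∈ Finset.range N, lam ^ (-((j:ℤ)+1)) := by
        rw [auxV]
        congr 1
      rw [hV1]
      linarith [h]
    · -- state positive: i.val > N
      rcases Nat.lt_or_ge (i:ℕ) (2*N) with h0 | h0
      · -- middle positive: k = i.val - N ∈ [1, N-1]
        set k := (i:ℕ) - N with hk
        have hk1 : 1 ≤ k := by omega
        have hk2 : k ≤ N - 1 := by omega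
        rw [row_pos N k hN hk1 hk2 _ i (by omega)]
        have hieq : i = ⟨N + k, by omega⟩ := Fin.ext (by simp only [Fin.val_mk]; omega)
        have hidx : (⟨N + k + 1, by omega⟩ : Fin (2*N+1)) = ⟨N + (k+1), by omega⟩ :=
          Fin.ext (by simp only [Fin.val_mk]; omega)
        conv_rhs => rw [hieq]
        rw [hidx, auxv_posk N lam (k+1) (by omega) (by omega),
          auxv_posk N lam k (by omega) (by omega), auxv_center,
          auxV_step N lam hlam k hk2 hN]
      · -- top row, state N
        have h2N : (i:ℕ) = 2*N := by omega
        rw [row_top N hN _ i h2N, auxv_center]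
        have hieq : i = ⟨N + N, by omega⟩ := Fin.ext (by simp only [Fin.val_mk]; omega)
        conv_rhs => rw [hieq]
        rw [auxv_posk N lam N (by omega) (by omega)]
        exact (auxV_top N lam hlam).symm

/-- `λ > 1` is an eigenvalue of `M_N` with a positive eigenvector iff
`λ⁻¹ + 2(λ^{-2} + … + λ^{-(N+1)}) = 1`. -/
theorem stmt_7 (N : ℕ) (hN : 1 ≤ N) (lam : ℝ) (hlam : 1 < lam) :
    (∃ v : Fin (2 * N + 1) → ℝ, (∀ i, 0 < v i) ∧ (adjMatrix N).mulVec v = lam • v) ↔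
      lam⁻¹ + 2 * ∑ k ∈ Finset.Icc 2 (N + 1), lam ^ (-(k : ℤ)) = 1 := by
  rw [bridge1 N lam hlam]
  constructor
  · rintro ⟨v, hpos, hv⟩
    exact forward N hN lam hlam v hpos hv
  · intro h
    exact backward N hN lam hlam ((bridge2 N lam hlam).mp h)
end

section
/- The unique root in (1, ∞) of x^{-1} + 2∑_{k=2}^{N+1} x^{-k} = 1 is strictly less than 1 + √2, for every integer N ≥ 1. -/
/-- Any root `x > 1` of `x⁻¹ + 2∑_{k=2}^{N+1} x^{-k} = 1` is strictly less than `1 + √2`. -/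
theorem stmt_9 (N : ℕ) (hN : 1 ≤ N) (x : ℝ) (hx : 1 < x)
    (hroot : x⁻¹ + 2 * ∑ k ∈ Finset.Icc 2 (N + 1), x ^ (-(k : ℤ)) = 1) :
    x < 1 + Real.sqrt 2 := by
  by_contra hcon
  push_neg at hcon
  have h2 : Real.sqrt 2 ^ 2 = 2 := Real.sq_sqrt (by norm_num)
  have hs1 : 1 < Real.sqrt 2 := by nlinarith [Real.sqrt_nonneg 2]
  set t : ℝ := Real.sqrt 2 - 1 with ht
  have ht0 : 0 < t := by simp [ht]; linarith
  have ht1 : t < 1 := by simp [ht]; nlinarith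
  have hden : (0:ℝ) < 1 - t := by linarith
  have ht2 : t ^ 2 + 2 * t - 1 = 0 := by rw [ht]; nlinarith
  have hmul : (1 + Real.sqrt 2) * t = 1 := by rw [ht]; nlinarith
  have htinv : (1 + Real.sqrt 2)⁻¹ = t := inv_eq_of_mul_eq_one_right hmul
  have hxpos : (0:ℝ) < x := lt_trans one_pos hx
  have h1s : (0:ℝ) < 1 + Real.sqrt 2 := by linarith
  have hxinv : x⁻¹ ≤ t := by
    rw [← htinv]
    exact inv_anti₀ h1s hcon
  have h0x : (0:ℝ) ≤ x⁻¹ := by positivity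
  simp only [zpow_neg, zpow_natCast, ← inv_pow] at hroot
  have hsum_le : ∑ k ∈ Finset.Icc 2 (N + 1), (x⁻¹) ^ k
      ≤ ∑ k ∈ Finset.Icc 2 (N + 1), t ^ k :=
    Finset.sum_le_sum fun k _ => pow_le_pow_left₀ h0x hxinv k
  -- key : t + 2 * ∑ t^k < 1
  have hIcc : Finset.Icc 2 (N + 1) = Finset.Ico 2 (N + 2) := by
    rw [← Finset.Ico_add_one_right_eq_Icc]; rfl
  have hsplit := Finset.sum_Ico_consecutive (fun k => t ^ k)
    (by norm_num : 0 ≤ 2) (by omega : 2 ≤ N + 2)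
  have hr0 : ∑ k ∈ Finset.Ico 0 2, t ^ k = 1 + t := by
    norm_num [Finset.sum_range_succ, ← Finset.range_eq_Ico]
  have hgeom : ∑ k ∈ Finset.Ico 0 (N + 2), t ^ k = (t ^ (N + 2) - 1) / (t - 1) := by
    rw [← Finset.range_eq_Ico, geom_sum_eq (ne_of_lt ht1)]
  have hsum_eq : ∑ k ∈ Finset.Icc 2 (N + 1), t ^ k
      = (t ^ (N + 2) - 1) / (t - 1) - (1 + t) := by
    rw [hIcc]
    have := hsplit
    linarith [this, hr0, hgeom]
  have hflip : (t ^ (N + 2) - 1) / (t - 1) = (1 - t ^ (N + 2)) / (1 - t) := by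
    rw [← neg_div_neg_eq]; ring_nf
  have hu : (0:ℝ) < t ^ (N + 2) := pow_pos ht0 _
  have hDeq : ((1 - t ^ (N + 2)) / (1 - t)) * (1 - t) = 1 - t ^ (N + 2) :=
    div_mul_cancel₀ _ (ne_of_gt hden)
  have key : t + 2 * ∑ k ∈ Finset.Icc 2 (N + 1), t ^ k < 1 := by
    rw [hsum_eq, hflip]
    nlinarith [hDeq, ht2, hu, hden]
  linarith [hroot, hsum_le, hxinv, key]
end

section
/- The topological entropy of the subshift of finite type Σ_{ℓ,N} equals the logarithm of the unique root in (1,∞) of the equation x^{-1} + 2(x^{-2} + ... + x^{-(N+1)}) = 1, equivalently the largest root of x^2 - 2x - 1 = -2x^{-N}. -/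
open Dynamics

/-- The (two-sided) subshift of finite type `Σ_{ℓ,N}`. -/
def SigmaSFT (N : ℕ) : Set (ℤ → ℤ) :=
  {f | (∀ n, |f n| ≤ (N : ℤ)) ∧ ∀ n, adjSFT N (f n) (f (n + 1))}


instance (N : ℕ) (i j : ℤ) : Decidable (adjSFT N i j) := by unfold adjSFT; infer_instance

/-- words of length n+1 -/
noncomputable def words (N n : ℕ) : Finset (Fin (n+1) → ℤ) :=
  (Fintype.piFinset fun _ => Finset.Icc (-(N:ℤ)) N).filter
    (fun u => ∀ k : Fin n, adjSFT N (u k.castSucc) (u k.succ))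

noncomputable def wstart (N n : ℕ) (i : ℤ) : Finset (Fin (n+1) → ℤ) :=
  (words N n).filter (fun u => u 0 = i)

noncomputable def succs (N : ℕ) (i : ℤ) : Finset ℤ := (Finset.Icc (-(N:ℤ)) N).filter (adjSFT N i)

lemma mem_words {N n : ℕ} {u : Fin (n+1) → ℤ} :
    u ∈ words N n ↔ (∀ k, |u k| ≤ (N:ℤ)) ∧ ∀ k : Fin n, adjSFT N (u k.castSucc) (u k.succ) := by
  simp [words, Fintype.mem_piFinset, abs_le, Finset.mem_Icc, and_comm]

lemma wstart_succ (N n : ℕ) (i : ℤ) (hi : i ∈ Finset.Icc (-(N:ℤ)) N) :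
    wstart N (n+1) i = (succs N i).biUnion (fun j => (wstart N n j).image (Fin.cons i)) := by
  ext u
  simp only [wstart, succs, Finset.mem_filter, Finset.mem_biUnion, Finset.mem_image, mem_words]
  constructor
  · rintro ⟨⟨hb, ha⟩, h0⟩
    refine ⟨u 1, ?_, fun k => u k.succ, ⟨⟨fun k => hb _, fun k => ?_⟩, ?_⟩, ?_⟩
    · have := ha 0
      simp only [Fin.castSucc_zero, h0] at this
      refine ⟨Finset.mem_Icc.2 (abs_le.1 (hb 1)), this⟩
    · show adjSFT N (u k.castSucc.succ) (u k.succ.succ)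
      rw [Fin.succ_castSucc]
      exact ha k.succ
    · rfl
    · rw [← h0]; exact Fin.cons_self_tail u
  · rintro ⟨j, ⟨hjI, hadj⟩, v, ⟨⟨hb, ha⟩, h0⟩, rfl⟩
    rw [Finset.mem_Icc] at hi hjI
    refine ⟨⟨fun k => ?_, fun k => ?_⟩, rfl⟩
    · refine Fin.cases ?_ (fun k' => ?_) k
      · simpa [abs_le] using hi
      · simpa using hb k'
    · refine Fin.cases ?_ (fun k' => ?_) k
      · simpa [h0] using hadj
      · rw [← Fin.succ_castSucc, Fin.cons_succ, Fin.cons_succ]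
        exact ha k'

lemma cons_inj {n : ℕ} (i : ℤ) :
    Function.Injective (fun v : Fin (n+1) → ℤ => (Fin.cons i v : Fin (n+2) → ℤ)) :=
  fun v v' h => funext fun k => by
    have := congrFun h k.succ; simpa using this

lemma card_wstart_succ (N n : ℕ) (i : ℤ) (hi : i ∈ Finset.Icc (-(N:ℤ)) N) :
    (wstart N (n+1) i).card = ∑ j ∈ succs N i, (wstart N n j).card := by
  rw [wstart_succ N n i hi, Finset.card_biUnion, ]
  · exact Finset.sum_congr rfl fun j _ =>
      Finset.card_image_of_injective _ (cons_inj i)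
  · intro j _ j' _ hjj'
    simp only [Finset.disjoint_left, Finset.mem_image]
    rintro w ⟨v, hv, rfl⟩ ⟨v', hv', he⟩
    have hv0 : v 0 = j := (Finset.mem_filter.1 hv).2
    have hv'0 : v' 0 = j' := (Finset.mem_filter.1 hv').2
    exact hjj' (by rw [← hv0, ← hv'0, cons_inj i he.symm])

section
variable (N : ℕ) (x : ℝ)

noncomputable def Ssum (x : ℝ) : ℕ → ℝ := fun k => ∑ j ∈ Finset.Icc 1 k, x ^ (-(j:ℤ))

noncomputable def vfun (N : ℕ) (x : ℝ) : ℤ → ℝ := fun i =>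
  if i = 0 then 1 else Ssum x (N + 1 - i.natAbs)

lemma Ssum_zero : Ssum x 0 = 0 := by simp [Ssum]

lemma Ssum_succ (k : ℕ) : Ssum x (k+1) = Ssum x k + x ^ (-(k+1:ℤ)) := by
  rw [Ssum, Ssum, Finset.sum_Icc_succ_top (by omega)]
  norm_num

lemma Ssum_key (hx : 0 < x) (k : ℕ) : x * Ssum x (k+1) = 1 + Ssum x k := by
  induction k with
  | zero => simp [Ssum_succ, Ssum_zero, zpow_neg, mul_inv_cancel₀ (ne_of_gt hx)]
  | succ k ih =>
    have h2 : x ^ (-(k+1:ℤ)) = x ^ (-(k+1+1:ℤ)) * x := by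
      rw [← zpow_add_one₀ (ne_of_gt hx)]; ring_nf
    rw [Ssum_succ x (k+1), mul_add, ih, Ssum_succ x k, h2]
    push_cast
    ring

lemma Ssum_nonneg (hx : 0 < x) (k : ℕ) : 0 ≤ Ssum x k :=
  Finset.sum_nonneg fun j _ => le_of_lt (zpow_pos hx _)

lemma Ssum_mono (hx : 0 < x) {k l : ℕ} (h : k ≤ l) : Ssum x k ≤ Ssum x l :=
  Finset.sum_le_sum_of_subset_of_nonneg (Finset.Icc_subset_Icc_right (by omega))
    fun j _ _ => le_of_lt (zpow_pos hx _)

variable {N x}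

lemma hS_of_root (hx : 1 < x)
    (hroot : x⁻¹ + 2 * ∑ k ∈ Finset.Icc 2 (N + 1), x ^ (-(k : ℤ)) = 1) :
    2 * Ssum x (N+1) - x⁻¹ = 1 := by
  have h1 : Finset.Icc 1 (N+1) = insert 1 (Finset.Icc 2 (N+1)) := by
    ext j; simp [Finset.mem_Icc, Finset.mem_insert]; omega
  have : Ssum x (N+1) = x⁻¹ + ∑ k ∈ Finset.Icc 2 (N + 1), x ^ (-(k : ℤ)) := by
    rw [Ssum, h1, Finset.sum_insert (by simp)]
    norm_num
  rw [this]; linarith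

lemma key0 (hN : 1 ≤ N) (hx : 1 < x)
    (hroot : x⁻¹ + 2 * ∑ k ∈ Finset.Icc 2 (N + 1), x ^ (-(k : ℤ)) = 1) :
    1 + 2 * Ssum x N = x := by
  have h0 : (0:ℝ) < x := by linarith
  have h1 := hS_of_root hx hroot
  have h2 := Ssum_key x h0 N
  have h3 : x * (2 * Ssum x (N+1) - x⁻¹) = x * 1 := by rw [h1]
  rw [mul_sub, mul_one, mul_inv_cancel₀ (ne_of_gt h0)] at h3
  nlinarith [h2]

lemma SsumN_lt_one (hx : 1 < x)
    (hroot : x⁻¹ + 2 * ∑ k ∈ Finset.Icc 2 (N + 1), x ^ (-(k : ℤ)) = 1) {k : ℕ}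
    (hk : k ≤ N + 1) : Ssum x k < 1 := by
  have h0 : (0:ℝ) < x := by linarith
  have h1 := hS_of_root hx hroot
  have hinv : x⁻¹ < 1 := by
    rw [inv_lt_one_iff₀]; right; exact hx
  have := Ssum_mono x h0 hk
  linarith

lemma vfun_bounds (hx : 1 < x)
    (hroot : x⁻¹ + 2 * ∑ k ∈ Finset.Icc 2 (N + 1), x ^ (-(k : ℤ)) = 1)
    {i : ℤ} (hi : i ∈ Finset.Icc (-(N:ℤ)) N) : x⁻¹ ≤ vfun N x i ∧ vfun N x i ≤ 1 := by
  have h0 : (0:ℝ) < x := by linarith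
  have hinv : x⁻¹ ≤ 1 := le_of_lt (by rw [inv_lt_one_iff₀]; right; exact hx)
  rw [Finset.mem_Icc] at hi
  unfold vfun
  split_ifs with h
  · exact ⟨hinv, le_refl 1⟩
  · have hna : 1 ≤ i.natAbs ∧ i.natAbs ≤ N := by omega
    constructor
    · have : Ssum x 1 ≤ Ssum x (N + 1 - i.natAbs) := Ssum_mono x h0 (by omega)
      have hS1 : Ssum x 1 = x⁻¹ := by
        simp [Ssum, Finset.Icc_self]
      linarith
    · exact le_of_lt (SsumN_lt_one hx hroot (by omega))
end

section
variable {N : ℕ} {x : ℝ}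

lemma succs_zero (hN : 1 ≤ N) : succs N 0 = {0, 1, -1} := by
  ext j; simp only [succs, adjSFT, Finset.mem_filter, Finset.mem_Icc, Finset.mem_insert,
    Finset.mem_singleton, true_and, and_true]; omega

lemma succs_pos {i : ℤ} (h1 : 1 ≤ i) (h2 : i ≤ (N:ℤ) - 1) : succs N i = {i+1, 0} := by
  ext j; simp only [succs, adjSFT, Finset.mem_filter, Finset.mem_Icc, Finset.mem_insert,
    Finset.mem_singleton, true_and, and_true]; omega

lemma succs_N (hN : 1 ≤ N) : succs N (N:ℤ) = {0} := by
  ext j; simp only [succs, adjSFT, Finset.mem_filter, Finset.mem_Icc,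
    Finset.mem_singleton, true_and, and_true]; omega

lemma succs_neg {i : ℤ} (h1 : -((N:ℤ)-1) ≤ i) (h2 : i ≤ -1) : succs N i = {i-1, 0} := by
  ext j; simp only [succs, adjSFT, Finset.mem_filter, Finset.mem_Icc, Finset.mem_insert,
    Finset.mem_singleton, true_and, and_true]; omega

lemma succs_negN (hN : 1 ≤ N) : succs N (-(N:ℤ)) = {0} := by
  ext j; simp only [succs, adjSFT, Finset.mem_filter, Finset.mem_Icc,
    Finset.mem_singleton, true_and, and_true]; omega

lemma eigen (hN : 1 ≤ N) (hx : 1 < x)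
    (hroot : x⁻¹ + 2 * ∑ k ∈ Finset.Icc 2 (N + 1), x ^ (-(k : ℤ)) = 1)
    {i : ℤ} (hi : i ∈ Finset.Icc (-(N:ℤ)) N) :
    ∑ j ∈ succs N i, vfun N x j = x * vfun N x i := by
  have h0 : (0:ℝ) < x := by linarith
  rw [Finset.mem_Icc] at hi
  rcases eq_or_ne i 0 with rfl | hne
  · rw [succs_zero hN]
    have hv1 : vfun N x 1 = Ssum x N := by simp [vfun]
    have hvm1 : vfun N x (-1) = Ssum x N := by simp [vfun]
    have hv0 : vfun N x 0 = 1 := by simp [vfun]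
    rw [show ({0, 1, -1} : Finset ℤ) = insert 0 (insert 1 {-1}) from rfl,
      Finset.sum_insert (by decide), Finset.sum_insert (by decide), Finset.sum_singleton,
      hv0, hv1, hvm1]
    have := key0 hN hx hroot
    linarith
  · have hna : 1 ≤ i.natAbs ∧ i.natAbs ≤ N := by omega
    have hvi : vfun N x i = Ssum x (N + 1 - i.natAbs) := by simp [vfun, hne]
    have hstep : x * Ssum x (N + 1 - i.natAbs) = 1 + Ssum x (N - i.natAbs) := by
      have : N + 1 - i.natAbs = (N - i.natAbs) + 1 := by omega
      rw [this, Ssum_key x h0]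
    rcases le_or_gt i (-1) with hneg | hpos
    · rcases eq_or_lt_of_le (show -(N:ℤ) ≤ i from hi.1) with heq | hlt
      · have hieq : i = -(N:ℤ) := heq.symm
        subst hieq
        rw [succs_negN hN, Finset.sum_singleton]
        have : vfun N x 0 = 1 := by simp [vfun]
        rw [this, hvi]
        have hNa : ((-(N:ℤ)).natAbs) = N := by omega
        rw [hNa, show N + 1 - N = 1 from by omega]
        have : Ssum x 1 = x⁻¹ := by simp [Ssum, Finset.Icc_self]
        rw [this, mul_inv_cancel₀ (ne_of_gt h0)]
      · rw [succs_neg (by omega) hneg, Finset.sum_insert (by simp; omega),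
          Finset.sum_singleton]
        have hv0 : vfun N x 0 = 1 := by simp [vfun]
        have hvim : vfun N x (i-1) = Ssum x (N - i.natAbs) := by
          have h1 : (i-1) ≠ 0 := by omega
          have h2 : (i-1).natAbs = i.natAbs + 1 := by omega
          simp only [vfun, h1, if_neg, if_false, h2]
          rw [show N + 1 - (i.natAbs + 1) = N - i.natAbs from by omega]
        rw [hv0, hvim, hvi, hstep]; ring
    · have hpos1 : 1 ≤ i := by omega
      rcases eq_or_lt_of_le (show i ≤ (N:ℤ) from hi.2) with heq | hlt
      · subst heq
        rw [succs_N hN, Finset.sum_singleton]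
        have : vfun N x 0 = 1 := by simp [vfun]
        rw [this, hvi]
        have hNa : (((N:ℤ)).natAbs) = N := by omega
        rw [hNa, show N + 1 - N = 1 from by omega]
        have : Ssum x 1 = x⁻¹ := by simp [Ssum, Finset.Icc_self]
        rw [this, mul_inv_cancel₀ (ne_of_gt h0)]
      · rw [succs_pos hpos1 (by omega), Finset.sum_insert (by simp; omega),
          Finset.sum_singleton]
        have hv0 : vfun N x 0 = 1 := by simp [vfun]
        have hvip : vfun N x (i+1) = Ssum x (N - i.natAbs) := by
          have h1 : (i+1) ≠ 0 := by omega
          have h2 : (i+1).natAbs = i.natAbs + 1 := by omega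
          simp only [vfun, h1, if_neg, if_false, h2]
          rw [show N + 1 - (i.natAbs + 1) = N - i.natAbs from by omega]
        rw [hv0, hvip, hvi, hstep]; ring

end

section
variable {N : ℕ} {x : ℝ}

lemma succs_subset (N : ℕ) (i : ℤ) : succs N i ⊆ Finset.Icc (-(N:ℤ)) N :=
  Finset.filter_subset _ _

lemma wstart_zero (N : ℕ) {i : ℤ} (hi : i ∈ Finset.Icc (-(N:ℤ)) N) :
    wstart N 0 i = {fun _ => i} := by
  ext u
  simp only [wstart, mem_words, Finset.mem_filter, Finset.mem_singleton]
  constructor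
  · rintro ⟨⟨hb, _⟩, h0⟩
    funext k
    have : k = 0 := Fin.ext (by omega)
    rw [this, h0]
  · rintro rfl
    rw [Finset.mem_Icc] at hi
    exact ⟨⟨fun k => by simpa [abs_le] using hi, fun k => k.elim0⟩, rfl⟩

lemma card_wstart_bounds (hN : 1 ≤ N) (hx : 1 < x)
    (hroot : x⁻¹ + 2 * ∑ k ∈ Finset.Icc 2 (N + 1), x ^ (-(k : ℤ)) = 1) :
    ∀ n : ℕ, ∀ i ∈ Finset.Icc (-(N:ℤ)) N,
      x^n * vfun N x i ≤ ((wstart N n i).card : ℝ) ∧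
      ((wstart N n i).card : ℝ) ≤ x^(n+1) * vfun N x i := by
  have h0 : (0:ℝ) < x := by linarith
  intro n
  induction n with
  | zero =>
    intro i hi
    rw [wstart_zero N hi, Finset.card_singleton]
    obtain ⟨hlb, hub⟩ := vfun_bounds hx hroot hi
    constructor
    · simpa using hub
    · push_cast
      calc (1:ℝ) = x * x⁻¹ := by rw [mul_inv_cancel₀ (ne_of_gt h0)]
        _ ≤ x^(0+1) * vfun N x i := by
            rw [pow_one]
            exact mul_le_mul_of_nonneg_left hlb (le_of_lt h0)
  | succ n ih =>
    intro i hi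
    rw [card_wstart_succ N n i hi]
    push_cast
    constructor
    · calc x^(n+1) * vfun N x i = x^n * (x * vfun N x i) := by ring
        _ = x^n * ∑ j ∈ succs N i, vfun N x j := by rw [eigen hN hx hroot hi]
        _ = ∑ j ∈ succs N i, x^n * vfun N x j := Finset.mul_sum _ _ _
        _ ≤ ∑ j ∈ succs N i, ((wstart N n j).card : ℝ) :=
            Finset.sum_le_sum fun j hj => (ih j (succs_subset N i hj)).1
    · calc (∑ j ∈ succs N i, ((wstart N n j).card : ℝ))
          ≤ ∑ j ∈ succs N i, x^(n+1) * vfun N x j :=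
            Finset.sum_le_sum fun j hj => (ih j (succs_subset N i hj)).2
        _ = x^(n+1) * ∑ j ∈ succs N i, vfun N x j := (Finset.mul_sum _ _ _).symm
        _ = x^(n+1) * (x * vfun N x i) := by rw [eigen hN hx hroot hi]
        _ = x^(n+1+1) * vfun N x i := by ring

lemma card_words_eq_sum (N n : ℕ) :
    (words N n).card = ∑ i ∈ Finset.Icc (-(N:ℤ)) N, (wstart N n i).card := by
  unfold wstart
  exact Finset.card_eq_sum_card_fiberwise fun u hu => by
    rw [Finset.mem_coe, Finset.mem_Icc]
    exact abs_le.1 ((mem_words.1 hu).1 0)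

lemma card_words_lb (hN : 1 ≤ N) (hx : 1 < x)
    (hroot : x⁻¹ + 2 * ∑ k ∈ Finset.Icc 2 (N + 1), x ^ (-(k : ℤ)) = 1) (n : ℕ) :
    x^n ≤ ((words N n).card : ℝ) := by
  rw [card_words_eq_sum]
  push_cast
  have h00 : (0:ℤ) ∈ Finset.Icc (-(N:ℤ)) N := by rw [Finset.mem_Icc]; omega
  calc x^n = x^n * vfun N x 0 := by simp [vfun]
    _ ≤ ((wstart N n 0).card : ℝ) := (card_wstart_bounds hN hx hroot n 0 h00).1
    _ ≤ ∑ i ∈ Finset.Icc (-(N:ℤ)) N, ((wstart N n i).card : ℝ) :=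
        Finset.single_le_sum (f := fun i => ((wstart N n i).card : ℝ)) (fun i _ => by positivity) h00

lemma card_words_ub (hN : 1 ≤ N) (hx : 1 < x)
    (hroot : x⁻¹ + 2 * ∑ k ∈ Finset.Icc 2 (N + 1), x ^ (-(k : ℤ)) = 1) (n : ℕ) :
    ((words N n).card : ℝ) ≤ (2*N+1) * x^(n+1) := by
  have h0 : (0:ℝ) < x := by linarith
  rw [card_words_eq_sum]
  push_cast
  calc (∑ i ∈ Finset.Icc (-(N:ℤ)) N, ((wstart N n i).card : ℝ))
      ≤ ∑ i ∈ Finset.Icc (-(N:ℤ)) N, x^(n+1) * 1 := Finset.sum_le_sum fun i hi =>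
        le_trans (card_wstart_bounds hN hx hroot n i hi).2
          (mul_le_mul_of_nonneg_left (vfun_bounds hx hroot hi).2 (by positivity))
    _ = (2*N+1) * x^(n+1) := by
        rw [Finset.sum_const, Int.card_Icc]
        have : ((N:ℤ) + 1 - -(N:ℤ)).toNat = 2*N+1 := by omega
        rw [this]
        push_cast
        ring
end

def shiftT : (ℤ → ℤ) → (ℤ → ℤ) := fun f => fun n => f (n + 1)

lemma shift_iterate (k : ℕ) (f : ℤ → ℤ) (n : ℤ) : shiftT^[k] f n = f (n + k) := by
  induction k generalizing f n with
  | zero => simp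
  | succ k ih =>
    rw [Function.iterate_succ_apply, ih (shiftT f) n]
    show f (n + k + 1) = _
    congr 1
    push_cast
    ring

def extSFT {n : ℕ} (u : Fin (n+1) → ℤ) (s0 : ℤ) : ℤ → ℤ := fun k =>
  if k < s0 then (if 0 ≤ u 0 then max (u 0 - (s0 - k)) 0 else min (u 0 + (s0 - k)) 0)
  else if h : k ≤ s0 + n then u ⟨(k - s0).toNat, by omega⟩ else 0

lemma ext_ramp {n : ℕ} (u : Fin (n+1) → ℤ) {s0 k : ℤ} (h : k < s0) :
    extSFT u s0 k = if 0 ≤ u 0 then max (u 0 - (s0 - k)) 0 else min (u 0 + (s0 - k)) 0 := by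
  rw [extSFT, if_pos h]

lemma ext_window {n : ℕ} (u : Fin (n+1) → ℤ) {s0 k : ℤ} (h1 : s0 ≤ k) (h2 : k ≤ s0 + n) :
    extSFT u s0 k = u ⟨(k - s0).toNat, by omega⟩ := by
  rw [extSFT, if_neg (by omega), dif_pos h2]

lemma ext_right {n : ℕ} (u : Fin (n+1) → ℤ) {s0 k : ℤ} (h1 : s0 ≤ k) (h2 : s0 + n < k) :
    extSFT u s0 k = 0 := by
  rw [extSFT, if_neg (by omega), dif_neg (by omega)]

lemma ext_window' {n : ℕ} (u : Fin (n+1) → ℤ) (s0 : ℤ) (t : Fin (n+1)) :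
    extSFT u s0 (s0 + t) = u t := by
  rw [ext_window u (by omega) (by omega : s0 + (t:ℤ) ≤ s0 + n)]
  · congr 1
    exact Fin.ext (by simp)

lemma adj_to_zero {N : ℕ} {i : ℤ} (h : |i| ≤ (N:ℤ)) : adjSFT N i 0 := by
  rw [abs_le] at h
  unfold adjSFT
  omega

lemma ext_mem {N n : ℕ} (hN : 1 ≤ N) {u : Fin (n+1) → ℤ} (hu : u ∈ words N n) (s0 : ℤ) :
    extSFT u s0 ∈ SigmaSFT N := by
  obtain ⟨hb, ha⟩ := mem_words.1 hu
  have hb0 := abs_le.1 (hb 0)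
  constructor
  · intro k
    rcases lt_or_ge k s0 with h1 | h1
    · rw [ext_ramp u h1, abs_le]
      split_ifs <;> constructor <;> omega
    · rcases le_or_gt k (s0 + n) with h2 | h2
      · rw [ext_window u h1 h2]
        exact hb _
      · rw [ext_right u h1 h2]
        simpa using Nat.cast_nonneg N
  · intro k
    rcases lt_or_ge (k+1) s0 with hA | hA
    · -- both ramp
      rw [ext_ramp u (by omega), ext_ramp u hA]
      unfold adjSFT
      simp only [max_def, min_def]
      split_ifs <;> omega
    · rcases eq_or_lt_of_le hA with hB | hB
      · -- k+1 = s0 : ramp to u 0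
        rw [ext_ramp u (by omega), ext_window u (by omega) (by omega : k+1 ≤ s0 + n)]
        have he : (⟨((k+1) - s0).toNat, by omega⟩ : Fin (n+1)) = 0 :=
          Fin.ext (by simp only [Fin.val_zero]; omega)
        rw [he]
        unfold adjSFT
        simp only [max_def, min_def]
        split_ifs <;> omega
      · rcases le_or_gt (k+1) (s0 + n) with hC | hC
        · -- interior
          rw [ext_window u (by omega) (by omega), ext_window u (by omega) hC]
          have hlt : (k - s0).toNat < n := by omega
          have := ha ⟨(k - s0).toNat, hlt⟩
          have e1 : (⟨(k - s0).toNat, by omega⟩ : Fin (n+1)) =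
              Fin.castSucc ⟨(k - s0).toNat, hlt⟩ := Fin.ext (by simp)
          have e2 : (⟨(k + 1 - s0).toNat, by omega⟩ : Fin (n+1)) =
              Fin.succ ⟨(k - s0).toNat, hlt⟩ := Fin.ext (by simp; omega)
          rw [e1, e2]
          exact this
        · rcases le_or_gt k (s0 + n) with hD | hD
          · -- last step to 0
            rw [ext_window u (by omega) hD, ext_right u (by omega) hC]
            exact adj_to_zero (hb _)
          · rw [ext_right u (by omega) hD, ext_right u (by omega) hC]
            exact adj_to_zero (by simpa using Nat.cast_nonneg N)

def wordOf (f : ℤ → ℤ) (s0 : ℤ) (n : ℕ) : Fin (n+1) → ℤ := fun t => f (s0 + t)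

lemma wordOf_mem {N : ℕ} {f : ℤ → ℤ} (hf : f ∈ SigmaSFT N) (s0 : ℤ) (n : ℕ) :
    wordOf f s0 n ∈ words N n := by
  rw [mem_words]
  refine ⟨fun k => hf.1 _, fun k => ?_⟩
  have := hf.2 (s0 + k.val)
  simp only [wordOf, Fin.coe_castSucc, Fin.val_succ]
  push_cast
  rw [show s0 + ((k:ℤ) + 1) = s0 + (k:ℤ) + 1 by ring]
  exact this

open Dynamics Uniformity ENNReal NNReal

def Vent (m : ℕ) : Set ((ℤ→ℤ) × (ℤ→ℤ)) := {p | ∀ i : ℤ, |i| ≤ (m:ℤ) → p.1 i = p.2 i}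

def Uent : Set ((ℤ→ℤ) × (ℤ→ℤ)) := {p | p.1 0 = p.2 0}

lemma eqRel_mem_unif : {p : ℤ × ℤ | p.1 = p.2} ∈ 𝓤 ℤ := by
  have h := Metric.dist_mem_uniformity (α := ℤ) (show (0:ℝ) < 1/2 by norm_num)
  filter_upwards [h] with p hp
  by_contra hne
  rw [Int.dist_eq] at hp
  have h2 : (1:ℤ) ≤ |p.1 - p.2| := Int.one_le_abs (sub_ne_zero.2 hne)
  have h3 : (1:ℝ) ≤ |(p.1:ℝ) - p.2| := by exact_mod_cast h2
  linarith

lemma single_mem_unif (i : ℤ) : {p : (ℤ→ℤ)×(ℤ→ℤ) | p.1 i = p.2 i} ∈ 𝓤 (ℤ → ℤ) := by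
  rw [Pi.uniformity]
  exact Filter.mem_iInf_of_mem i (Filter.preimage_mem_comap eqRel_mem_unif)

lemma Vent_mem_unif (m : ℕ) : Vent m ∈ 𝓤 (ℤ → ℤ) := by
  have he : Vent m = ⋂ i ∈ Finset.Icc (-(m:ℤ)) m, {p : (ℤ→ℤ)×(ℤ→ℤ) | p.1 i = p.2 i} := by
    ext p
    simp only [Vent, Set.mem_setOf_eq, Set.mem_iInter, Finset.mem_Icc, abs_le]
  rw [he]
  exact (Filter.biInter_finset_mem _).2 fun i _ => single_mem_unif i

lemma Uent_mem_unif : Uent ∈ 𝓤 (ℤ → ℤ) := single_mem_unif 0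

lemma exists_Vent_subset {U : Set ((ℤ→ℤ) × (ℤ→ℤ))} (hU : U ∈ 𝓤 (ℤ → ℤ)) :
    ∃ m : ℕ, Vent m ⊆ U := by
  rw [Pi.uniformity, Filter.mem_iInf] at hU
  obtain ⟨I, Ifin, V, hV, rfl⟩ := hU
  obtain ⟨m, hm⟩ := (Ifin.image Int.natAbs).bddAbove
  refine ⟨m, fun p hp => ?_⟩
  rw [Set.mem_iInter]
  rintro ⟨i, hi⟩
  obtain ⟨W, hW, hWsub⟩ := Filter.mem_comap.1 (hV ⟨i, hi⟩)
  apply hWsub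
  have : p.1 i = p.2 i := by
    apply hp
    have h1 : i.natAbs ∈ Int.natAbs '' I := ⟨i, hi, rfl⟩
    have h2 := hm h1
    rw [abs_le]
    omega
  simp only [Set.mem_preimage, this]
  exact refl_mem_uniformity hW

lemma mincard_ub {N : ℕ} (hN : 1 ≤ N) (m n : ℕ) :
    coverMincard shiftT (SigmaSFT N) (Vent m) (n+1) ≤
      ((words N (n + 2*m)).card : ℕ∞) := by
  classical
  set L := n + 2*m with hL
  set s : Finset (ℤ → ℤ) := (words N L).image (fun u => extSFT u (-(m:ℤ))) with hs
  have hcov : IsDynCoverOf shiftT (SigmaSFT N) (Vent m) (n+1) (s : Set (ℤ → ℤ)) := by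
    intro f hf
    have hu : wordOf f (-(m:ℤ)) L ∈ words N L := wordOf_mem hf _ _
    set u := wordOf f (-(m:ℤ)) L with hudef
    refine ⟨extSFT u (-(m:ℤ)), by
      exact Finset.mem_coe.2 (Finset.mem_image.2 ⟨u, hu, rfl⟩), ?_⟩
    rw [mem_dynEntourage]
    intro k hk
    intro i hi
    show shiftT^[k] f i = shiftT^[k] (extSFT u (-(m:ℤ))) i
    refine Eq.symm ?_
    rw [shift_iterate, shift_iterate]
    rw [abs_le] at hi
    have hw : -(m:ℤ) ≤ i + k ∧ i + k ≤ -(m:ℤ) + L := by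
      constructor
      · omega
      · push_cast [hL]; omega
    rw [ext_window u hw.1 hw.2]
    show u _ = f (i + k)
    rw [hudef]
    show f (-(m:ℤ) + ((i + (k:ℤ) - -(m:ℤ)).toNat : ℤ)) = f (i + k)
    congr 1
    omega
  have := (hcov.coverMincard_le_card)
  refine this.trans ?_
  exact_mod_cast Nat.cast_le.2 (Finset.card_image_le)

lemma mincard_lb {N : ℕ} (hN : 1 ≤ N) (n : ℕ) :
    ((words N n).card : ℕ∞) ≤ coverMincard shiftT (SigmaSFT N) Uent (n+1) := by
  rw [coverMincard]
  refine le_iInf fun s => le_iInf fun hs => ?_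
  rw [Nat.cast_le]
  have hex : ∀ u ∈ words N n, ∃ y, y ∈ s ∧ ∀ k : ℕ, k < n+1 → y (k:ℤ) = extSFT u 0 (k:ℤ) := by
    intro u hu
    obtain ⟨y, hy, hball⟩ := hs (ext_mem hN hu 0)
    refine ⟨y, hy, fun k hk => ?_⟩
    have := (mem_dynEntourage.1 hball) k hk
    have h0 : shiftT^[k] (extSFT u 0) 0 = shiftT^[k] y 0 := this
    rw [shift_iterate, shift_iterate] at h0
    simpa using h0.symm
  choose g hg1 hg2 using hex
  apply Finset.card_le_card_of_injOn (fun u => if h : u ∈ words N n then g u h else 0)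
  · intro u hu
    simp only [Finset.mem_coe] at hu ⊢
    simp only [hu, dif_pos]
    exact hg1 u hu
  · intro u hu v hv he
    simp only [Finset.mem_coe] at hu hv
    simp only [hu, hv, dif_pos] at he
    funext t
    have h1 := hg2 u hu t.val (by omega)
    have h2 := hg2 v hv t.val (by omega)
    rw [he] at h1
    have e1 : extSFT u 0 (t.val:ℤ) = u t := by
      rw [ext_window u (by omega) (by omega : (t.val:ℤ) ≤ 0 + n)]
      congr 1
    have e2 : extSFT v 0 (t.val:ℤ) = v t := by
      rw [ext_window v (by omega) (by omega : (t.val:ℤ) ≤ 0 + n)]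
      congr 1
    rw [e1] at h1
    rw [e2] at h2
    rw [← h1, ← h2]

open Filter in
lemma entourage_ub {N : ℕ} {x : ℝ} (hN : 1 ≤ N) (hx : 1 < x)
    (hroot : x⁻¹ + 2 * ∑ k ∈ Finset.Icc 2 (N + 1), x ^ (-(k : ℤ)) = 1) (m : ℕ) :
    coverEntropyEntourage shiftT (SigmaSFT N) (Vent m) ≤ (Real.log x : EReal) := by
  have h0 : (0:ℝ) < x := by linarith
  set C : ℝ := 2*(N:ℝ)+1 with hC
  have hCpos : 0 < C := by positivity
  set r : ℕ → ℝ := fun n => (Real.log C + (n + 2*m) * Real.log x)/n with hr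
  have hbd : ∀ n : ℕ, 1 ≤ n →
      ENNReal.log (coverMincard shiftT (SigmaSFT N) (Vent m) n) / (n : EReal) ≤ ((r n : ℝ) : EReal) := by
    intro n hn
    obtain ⟨n', rfl⟩ : ∃ n', n = n' + 1 := ⟨n - 1, by omega⟩
    have h1 := mincard_ub hN m n'
    have h2 : ((words N (n' + 2*m)).card : ℝ) ≤ C * x^(n' + 2*m + 1) := by
      calc ((words N (n' + 2*m)).card : ℝ) ≤ (2*N+1) * x^(n' + 2*m + 1) :=
            card_words_ub hN hx hroot _
        _ = C * x^(n' + 2*m + 1) := by rw [hC]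
    have h3 : (↑(coverMincard shiftT (SigmaSFT N) (Vent m) (n'+1)) : ℝ≥0∞) ≤
        ENNReal.ofReal (C * x^(n' + 2*m + 1)) := by
      calc (↑(coverMincard shiftT (SigmaSFT N) (Vent m) (n'+1)) : ℝ≥0∞)
          ≤ ((((words N (n' + 2*m)).card : ℕ∞)) : ℝ≥0∞) := ENat.toENNReal_mono h1
        _ = (((words N (n' + 2*m)).card : ℕ) : ℝ≥0∞) := ENat.toENNReal_coe _
        _ = ENNReal.ofReal (((words N (n' + 2*m)).card : ℕ) : ℝ) := (ENNReal.ofReal_natCast _).symm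
        _ ≤ ENNReal.ofReal (C * x^(n' + 2*m + 1)) := ENNReal.ofReal_le_ofReal h2
    have h4 : ENNReal.log (coverMincard shiftT (SigmaSFT N) (Vent m) (n'+1)) ≤
        ((Real.log C + ((n'+1) + 2*m) * Real.log x : ℝ) : EReal) := by
      refine (ENNReal.log_monotone h3).trans ?_
      rw [ENNReal.log_ofReal_of_pos (by positivity)]
      apply EReal.coe_le_coe_iff.2
      rw [Real.log_mul (ne_of_gt hCpos) (by positivity), Real.log_pow]
      apply le_of_eq
      push_cast
      ring
    calc ENNReal.log (coverMincard shiftT (SigmaSFT N) (Vent m) (n'+1)) / ((n'+1 : ℕ) : EReal)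
        ≤ ((Real.log C + ((n'+1) + 2*m) * Real.log x : ℝ) : EReal) / ((n'+1 : ℕ) : EReal) :=
          by simpa using EReal.monotone_div_right_of_nonneg (show (0:EReal) ≤ ((n'+1 : ℕ) : EReal) by exact_mod_cast Nat.zero_le (n'+1)) h4
      _ = ((r (n'+1) : ℝ) : EReal) := by
          rw [← EReal.coe_coe_eq_natCast, ← EReal.coe_div]
          exact EReal.coe_eq_coe_iff.2 (by rw [hr]; push_cast; ring)
  have hlim : Tendsto (fun n : ℕ => ((r n : ℝ) : EReal)) atTop (nhds ((Real.log x : ℝ) : EReal)) := by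
    rw [EReal.tendsto_coe]
    have hg : Tendsto (fun n : ℕ => Real.log C * (1/n) + (2*m*Real.log x) * (1/n) + Real.log x)
        atTop (nhds (Real.log C * 0 + (2*m*Real.log x) * 0 + Real.log x)) :=
      ((tendsto_one_div_atTop_nhds_zero_nat.const_mul _).add
        (tendsto_one_div_atTop_nhds_zero_nat.const_mul _)).add tendsto_const_nhds
    rw [show Real.log C * 0 + (2*m*Real.log x) * 0 + Real.log x = Real.log x by ring] at hg
    apply hg.congr'
    filter_upwards [eventually_ge_atTop 1] with n hn
    have hn0 : (n:ℝ) ≠ 0 := by positivity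
    rw [hr]
    field_simp
    ring
  rw [coverEntropyEntourage]
  have := Filter.limsup_le_limsup (f := atTop)
    (u := fun n : ℕ => ENNReal.log (coverMincard shiftT (SigmaSFT N) (Vent m) n) / (n : EReal))
    (v := fun n : ℕ => ((r n : ℝ) : EReal))
    (eventually_atTop.2 ⟨1, hbd⟩)
  exact this.trans_eq hlim.limsup_eq

open Filter in
lemma entourage_lb {N : ℕ} {x : ℝ} (hN : 1 ≤ N) (hx : 1 < x)
    (hroot : x⁻¹ + 2 * ∑ k ∈ Finset.Icc 2 (N + 1), x ^ (-(k : ℤ)) = 1) :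
    (Real.log x : EReal) ≤ coverEntropyEntourage shiftT (SigmaSFT N) Uent := by
  have h0 : (0:ℝ) < x := by linarith
  set r : ℕ → ℝ := fun n => ((n:ℝ) - 1) * Real.log x / n with hr
  have hbd : ∀ n : ℕ, 1 ≤ n →
      ((r n : ℝ) : EReal) ≤ ENNReal.log (coverMincard shiftT (SigmaSFT N) Uent n) / (n : EReal) := by
    intro n hn
    obtain ⟨n', rfl⟩ : ∃ n', n = n' + 1 := ⟨n - 1, by omega⟩
    have h1 := mincard_lb (N := N) hN n'
    have h2 : (x^n' : ℝ) ≤ ((words N n').card : ℝ) := card_words_lb hN hx hroot n'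
    have h3 : ENNReal.ofReal (x^n') ≤
        (↑(coverMincard shiftT (SigmaSFT N) Uent (n'+1)) : ℝ≥0∞) := by
      calc ENNReal.ofReal (x^n') ≤ ENNReal.ofReal (((words N n').card : ℕ) : ℝ) :=
            ENNReal.ofReal_le_ofReal h2
        _ = (((words N n').card : ℕ) : ℝ≥0∞) := ENNReal.ofReal_natCast _
        _ = ((((words N n').card : ℕ∞)) : ℝ≥0∞) := (ENat.toENNReal_coe _).symm
        _ ≤ _ := ENat.toENNReal_mono h1
    have h4 : ((n' * Real.log x : ℝ) : EReal) ≤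
        ENNReal.log (coverMincard shiftT (SigmaSFT N) Uent (n'+1)) := by
      refine le_trans ?_ (ENNReal.log_monotone h3)
      rw [ENNReal.log_ofReal_of_pos (by positivity), Real.log_pow]
    calc ((r (n'+1) : ℝ) : EReal)
        = ((n' * Real.log x : ℝ) : EReal) / ((n'+1 : ℕ) : EReal) := by
          rw [← EReal.coe_coe_eq_natCast, ← EReal.coe_div]
          exact EReal.coe_eq_coe_iff.2 (by rw [hr]; push_cast; ring)
      _ ≤ _ := by simpa using EReal.monotone_div_right_of_nonneg (show (0:EReal) ≤ ((n'+1 : ℕ) : EReal) by exact_mod_cast Nat.zero_le (n'+1)) h4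
  have hlim : Tendsto (fun n : ℕ => ((r n : ℝ) : EReal)) atTop (nhds ((Real.log x : ℝ) : EReal)) := by
    rw [EReal.tendsto_coe]
    have hg : Tendsto (fun n : ℕ => Real.log x - Real.log x * (1/n))
        atTop (nhds (Real.log x - Real.log x * 0)) :=
      tendsto_const_nhds.sub (tendsto_one_div_atTop_nhds_zero_nat.const_mul _)
    rw [show Real.log x - Real.log x * 0 = Real.log x by ring] at hg
    apply hg.congr'
    filter_upwards [eventually_ge_atTop 1] with n hn
    have hn0 : (n:ℝ) ≠ 0 := by positivity
    rw [hr]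
    field_simp
  rw [coverEntropyEntourage]
  refine le_trans (le_of_eq hlim.limsup_eq.symm) ?_
  exact Filter.limsup_le_limsup (eventually_atTop.2 ⟨1, hbd⟩)


/-- The topological entropy of `Σ_{ℓ,N}` equals `log x`, where `x` is the unique root in
`(1,∞)` of `x⁻¹ + 2(x^{-2} + … + x^{-(N+1)}) = 1`, equivalently the largest root of
`x^2 - 2x - 1 = -2x^{-N}`. -/
theorem stmt_15 (N : ℕ) (hN : 1 ≤ N) (x : ℝ) (hx : 1 < x)
    (hroot : x⁻¹ + 2 * ∑ k ∈ Finset.Icc 2 (N + 1), x ^ (-(k : ℤ)) = 1) :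
    x ^ 2 - 2 * x - 1 = -2 * x ^ (-(N : ℤ)) ∧
      coverEntropy (fun f : ℤ → ℤ => fun n => f (n + 1)) (SigmaSFT N)
        = (Real.log x : EReal) := by
  have h0 : (0:ℝ) < x := by linarith
  constructor
  · have h1 := hS_of_root hx hroot
    have h2 := key0 hN hx hroot
    have h3 : Ssum x (N+1) = Ssum x N + x ^ (-(N:ℤ)) * x⁻¹ := by
      rw [Ssum_succ]
      congr 1
      rw [← zpow_neg_one, ← zpow_add₀ (ne_of_gt h0)]
      congr 1
      push_cast; ring
    have h4 : x * x⁻¹ = 1 := mul_inv_cancel₀ (ne_of_gt h0)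
    linear_combination x * h1 - x * h2 - 2*x*h3 + (1 - 2*x^(-(N:ℤ)))*h4
  · show coverEntropy shiftT (SigmaSFT N) = (Real.log x : EReal)
    apply le_antisymm
    · show (⨆ U ∈ 𝓤 (ℤ→ℤ), coverEntropyEntourage shiftT (SigmaSFT N) U) ≤ _
      refine iSup₂_le fun U hU => ?_
      obtain ⟨m, hm⟩ := exists_Vent_subset hU
      exact (coverEntropyEntourage_antitone shiftT (SigmaSFT N) hm).trans
        (entourage_ub hN hx hroot m)
    · exact (entourage_lb hN hx hroot).trans
        (coverEntropyEntourage_le_coverEntropy shiftT (SigmaSFT N) Uent_mem_unif)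
end
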